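/- Let p ≥ 5 be a prime. Then H_{⌊p/3⌋} ≡ -(3/2)*q_p(3) (mod p), where H_n is the n-th harmonic number and q_p(3) = (3^{p-1}-1)/p. -/

import Mathlib

/-!
Lerch's formula: writing `a j = p ⌊a j / p⌋ + r_j` with `r_j = a j mod p`, the residues `r_j` permute
`1, …, p - 1`, and since `p² = 0` in `ZMod (p ^ 2)`,
`a ^ (p - 1) (p - 1)! = ∏ (r_j + p ⌊a j / p⌋) = (p - 1)! (1 + p ∑ ⌊a j / p⌋ / r_j)`,
so `q_p(a) ≡ ∑_{0 < j < p} ⌊a j / p⌋ / (a j) (mod p)`. For `a = 3` the floor `⌊3 j / p⌋` steps up at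
`j = ⌊p/3⌋ + 1` and at `j = p - ⌊p/3⌋`; the reflection `j ↦ p - j`, which negates `1 / j`, makes both
`H_{p-1}` vanish and the top block equal to `-H_{⌊p/3⌋}`, leaving `q_p(3) ≡ -(2/3) H_{⌊p/3⌋}`.
-/

open Finset

def fermatQuotient (p a : ℕ) : ℕ := (a ^ (p - 1) - 1) / p

theorem prod_one_add_mul_of_mul_self_eq_zero {ι R : Type*} [CommRing R] {c : R}
    (hc : c * c = 0) (s : Finset ι) (u : ι → R) :
    ∏ i ∈ s, (1 + c * u i) = 1 + c * ∑ i ∈ s, u i := by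
  classical
  induction s using Finset.induction_on with
  | empty => simp
  | insert x s hx ih =>
    rw [prod_insert hx, ih, sum_insert hx]
    linear_combination (u x * ∑ i ∈ s, u i) * hc

theorem prod_add_mul_of_mul_self_eq_zero {ι R : Type*} [CommRing R] {c : R} (hc : c * c = 0)
    {s : Finset ι} {r r' : ι → R} (hr : ∀ i ∈ s, r i * r' i = 1) (k : ι → R) :
    ∏ i ∈ s, (r i + c * k i) = (∏ i ∈ s, r i) * (1 + c * ∑ i ∈ s, k i * r' i) := by
  rw [← prod_one_add_mul_of_mul_self_eq_zero hc, ← prod_mul_distrib]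
  refine prod_congr rfl fun i hi => ?_
  linear_combination (-(c * k i)) * hr i hi

theorem not_dvd_of_mem_Ico {p j : ℕ} (hj : j ∈ Ico 1 p) : ¬ p ∣ j :=
  Nat.not_dvd_of_pos_of_lt (mem_Ico.1 hj).1 (mem_Ico.1 hj).2

section

variable {p : ℕ} [hp : Fact p.Prime]

theorem mul_mod_mem_Ico {a j : ℕ} (ha : ¬ p ∣ a) (hj : j ∈ Ico 1 p) : a * j % p ∈ Ico 1 p := by
  have hprod : ¬ p ∣ a * j := fun h => (hp.out.dvd_mul.1 h).elim ha (not_dvd_of_mem_Ico hj)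
  rw [mem_Ico]
  exact ⟨Nat.pos_of_ne_zero fun h => hprod (Nat.dvd_of_mod_eq_zero h), Nat.mod_lt _ hp.out.pos⟩

theorem prod_Ico_mul_mod {M : Type*} [CommMonoid M] {a : ℕ} (ha : ¬ p ∣ a) (f : ℕ → M) :
    ∏ j ∈ Ico 1 p, f (a * j % p) = ∏ j ∈ Ico 1 p, f j := by
  have hinj : Set.InjOn (fun j => a * j % p) (Ico 1 p) := by
    intro i hi j hj hij
    rw [coe_Ico, Set.mem_Ico] at hi hj
    exact (Nat.ModEq.cancel_left_of_coprime ((hp.out.coprime_iff_not_dvd).2 ha) hij).eq_of_lt_of_lt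
      hi.2 hj.2
  exact prod_nbij _ (fun j hj => mul_mod_mem_Ico ha hj) hinj
    (surjOn_of_injOn_of_card_le _ (fun j hj => mul_mod_mem_Ico ha hj) hinj le_rfl) fun _ _ => rfl

theorem pow_sub_one_eq_one_add_mul_fermatQuotient {a : ℕ} (ha : ¬ p ∣ a) :
    a ^ (p - 1) = 1 + p * fermatQuotient p a := by
  have hpos : 1 ≤ a ^ (p - 1) :=
    Nat.one_le_pow _ _ (Nat.pos_of_ne_zero fun h => ha (h ▸ dvd_zero p))
  have hdvd : p ∣ a ^ (p - 1) - 1 := by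
    rw [← ZMod.natCast_eq_zero_iff, Nat.cast_sub hpos, Nat.cast_pow, Nat.cast_one,
      ZMod.pow_card_sub_one_eq_one (by rwa [Ne, ZMod.natCast_eq_zero_iff]), sub_self]
  rw [fermatQuotient, Nat.mul_div_cancel' hdvd]
  omega

theorem isUnit_natCast_of_mem_Ico {j : ℕ} (hj : j ∈ Ico 1 p) : IsUnit (j : ZMod (p ^ 2)) :=
  (ZMod.isUnit_iff_coprime _ _).2 <|
    Nat.Coprime.pow_right _
      (Nat.coprime_comm.1 ((hp.out.coprime_iff_not_dvd).2 (not_dvd_of_mem_Ico hj)))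

theorem natCast_mul_eq_natCast_mul_iff {x y : ZMod (p ^ 2)} :
    (p : ZMod (p ^ 2)) * x = (p : ZMod (p ^ 2)) * y ↔
      ZMod.castHom (dvd_pow_self p two_ne_zero) (ZMod p) x =
        ZMod.castHom (dvd_pow_self p two_ne_zero) (ZMod p) y := by
  rw [← ZMod.natCast_zmod_val x, ← ZMod.natCast_zmod_val y]
  simp only [map_natCast, ← Nat.cast_mul, ZMod.natCast_eq_natCast_iff, sq]
  exact Nat.ModEq.mul_left_cancel_iff' hp.out.ne_zero

theorem castHom_inv_of_isUnit {n : ℕ} (h : p ∣ n) {x : ZMod n} (hx : IsUnit x) :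
    ZMod.castHom h (ZMod p) x⁻¹ = (ZMod.castHom h (ZMod p) x)⁻¹ :=
  eq_inv_of_mul_eq_one_right (by rw [← map_mul, ZMod.mul_inv_of_unit _ hx, map_one])

theorem natCast_pow_sub_one_eq_one_add_mul_sum {a : ℕ} (ha : ¬ p ∣ a) :
    (a : ZMod (p ^ 2)) ^ (p - 1) = 1 + p * ∑ j ∈ Ico 1 p,
      ((a * j / p : ℕ) : ZMod (p ^ 2)) * ((a * j % p : ℕ) : ZMod (p ^ 2))⁻¹ := by
  have hpp : (p : ZMod (p ^ 2)) * p = 0 := by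
    rw [← Nat.cast_mul, ← sq, ZMod.natCast_self]
  have hfact : IsUnit (∏ j ∈ Ico 1 p, (j : ZMod (p ^ 2))) :=
    IsUnit.prod_iff.2 fun j hj => isUnit_natCast_of_mem_Ico hj
  refine hfact.mul_left_cancel ?_
  calc (∏ j ∈ Ico 1 p, (j : ZMod (p ^ 2))) * (a : ZMod (p ^ 2)) ^ (p - 1)
      = ∏ j ∈ Ico 1 p,
          (((a * j % p : ℕ) : ZMod (p ^ 2)) + p * ((a * j / p : ℕ) : ZMod (p ^ 2))) := by
        simp_rw [← Nat.cast_mul, ← Nat.cast_add, Nat.mod_add_div, Nat.cast_mul, prod_mul_distrib,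
          prod_const, Nat.card_Ico, mul_comm]
    _ = (∏ j ∈ Ico 1 p, ((a * j % p : ℕ) : ZMod (p ^ 2))) * (1 + p * ∑ j ∈ Ico 1 p,
          ((a * j / p : ℕ) : ZMod (p ^ 2)) * ((a * j % p : ℕ) : ZMod (p ^ 2))⁻¹) :=
        prod_add_mul_of_mul_self_eq_zero hpp
          (fun j hj => ZMod.mul_inv_of_unit _ (isUnit_natCast_of_mem_Ico (mul_mod_mem_Ico ha hj))) _
    _ = _ := by rw [prod_Ico_mul_mod ha (fun n => (n : ZMod (p ^ 2)))]

theorem natCast_fermatQuotient_eq_sum {a : ℕ} (ha : ¬ p ∣ a) :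
    (fermatQuotient p a : ZMod p) =
      ∑ j ∈ Ico 1 p, ((a * j / p : ℕ) : ZMod p) * ((a : ZMod p) * j)⁻¹ := by
  have h := natCast_pow_sub_one_eq_one_add_mul_sum ha
  rw [← Nat.cast_pow, pow_sub_one_eq_one_add_mul_fermatQuotient ha, Nat.cast_add, Nat.cast_one,
    Nat.cast_mul] at h
  rw [← map_natCast (ZMod.castHom (dvd_pow_self p two_ne_zero) (ZMod p)),
    natCast_mul_eq_natCast_mul_iff.1 (add_left_cancel h), map_sum]
  refine sum_congr rfl fun j hj => ?_
  rw [map_mul, castHom_inv_of_isUnit _ (isUnit_natCast_of_mem_Ico (mul_mod_mem_Ico ha hj)),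
    map_natCast, map_natCast, ZMod.natCast_mod, Nat.cast_mul]

theorem sum_Ico_inv_reflect {n : ℕ} (hn : n < p) :
    ∑ j ∈ Ico (p - n) p, (j : ZMod p)⁻¹ = -∑ j ∈ Ico 1 (n + 1), (j : ZMod p)⁻¹ := by
  have h := sum_Ico_reflect (fun j => (j : ZMod p)⁻¹) 1 (show n + 1 ≤ p + 1 by omega)
  rw [Nat.add_sub_add_right, Nat.add_sub_cancel] at h
  rw [← h, ← sum_neg_distrib]
  refine sum_congr rfl fun j hj => ?_
  rw [Nat.cast_sub (by rw [mem_Ico] at hj; omega), ZMod.natCast_self, zero_sub, inv_neg]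

theorem sum_Ico_one_inv_eq_zero (hp2 : p ≠ 2) : ∑ j ∈ Ico 1 p, (j : ZMod p)⁻¹ = 0 := by
  have h := sum_Ico_inv_reflect (show p - 1 < p from Nat.sub_one_lt hp.out.ne_zero)
  rw [Nat.sub_sub_self hp.out.one_le, Nat.sub_add_cancel hp.out.one_le] at h
  exact (Ring.eq_self_iff_eq_zero_of_char_ne_two (by rwa [ZMod.ringChar_zmod_n])).1 h.symm

theorem sum_Ico_three_mul_div_mul_inv (hp5 : 5 ≤ p) :
    ∑ j ∈ Ico 1 p, ((3 * j / p : ℕ) : ZMod p) * (j : ZMod p)⁻¹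
      = -2 * ∑ j ∈ Ico 1 (p / 3 + 1), (j : ZMod p)⁻¹ := by
  set m := p / 3
  have hmod : p % 3 ≠ 0 := fun h => by
    have := (Nat.prime_dvd_prime_iff_eq Nat.prime_three hp.out).1 (Nat.dvd_of_mod_eq_zero h)
    omega
  have h3m : 3 * m < p := by omega
  have h3m' : p < 3 * m + 3 := by omega
  have split : ∀ f : ℕ → ZMod p, ∑ j ∈ Ico 1 p, f j
      = ∑ j ∈ Ico 1 (m + 1), f j + ∑ j ∈ Ico (m + 1) (p - m), f j + ∑ j ∈ Ico (p - m) p, f j :=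
    fun f => by
      rw [sum_Ico_consecutive _ (by omega) (by omega), sum_Ico_consecutive _ (by omega) (by omega)]
  have low : ∑ j ∈ Ico 1 (m + 1), ((3 * j / p : ℕ) : ZMod p) * (j : ZMod p)⁻¹ = 0 :=
    sum_eq_zero fun j hj => by
      rw [mem_Ico] at hj
      rw [Nat.div_eq_of_lt (by omega), Nat.cast_zero, zero_mul]
  have mid : ∑ j ∈ Ico (m + 1) (p - m), ((3 * j / p : ℕ) : ZMod p) * (j : ZMod p)⁻¹
      = ∑ j ∈ Ico (m + 1) (p - m), (j : ZMod p)⁻¹ :=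
    sum_congr rfl fun j hj => by
      rw [mem_Ico] at hj
      rw [Nat.div_eq_of_lt_le (k := 1) (by omega) (by omega), Nat.cast_one, one_mul]
  have high : ∑ j ∈ Ico (p - m) p, ((3 * j / p : ℕ) : ZMod p) * (j : ZMod p)⁻¹
      = 2 * ∑ j ∈ Ico (p - m) p, (j : ZMod p)⁻¹ := by
    rw [mul_sum]
    refine sum_congr rfl fun j hj => ?_
    rw [mem_Ico] at hj
    rw [Nat.div_eq_of_lt_le (k := 2) (by omega) (by omega), Nat.cast_ofNat]
  have htotal := sum_Ico_one_inv_eq_zero (p := p) (by omega)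
  rw [split] at htotal ⊢
  rw [low, mid, high]
  linear_combination htotal + sum_Ico_inv_reflect (show m < p by omega)

end

theorem stmt_6 (p : ℕ) [Fact p.Prime] (hp5 : 5 ≤ p) :
    ∑ j ∈ Finset.Icc 1 (p / 3), ((j : ZMod p))⁻¹
      = -(3 * (2 : ZMod p)⁻¹) * (((3 ^ (p - 1) - 1) / p : ℕ) : ZMod p) := by
  have h3 : ¬ p ∣ 3 := fun h => by have := Nat.le_of_dvd three_pos h; omega
  have h2ne : (2 : ZMod p) ≠ 0 := Ring.two_ne_zero (by rw [ZMod.ringChar_zmod_n]; omega)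
  have h3ne : (3 : ZMod p) ≠ 0 := by exact_mod_cast (ZMod.natCast_eq_zero_iff 3 p).not.2 h3
  have hq : (fermatQuotient p 3 : ZMod p)
      = 3⁻¹ * (-2 * ∑ j ∈ Ico 1 (p / 3 + 1), (j : ZMod p)⁻¹) := by
    rw [natCast_fermatQuotient_eq_sum h3, ← sum_Ico_three_mul_div_mul_inv hp5, mul_sum]
    simp only [mul_inv, Nat.cast_ofNat, mul_left_comm]
  rw [← Ico_add_one_right_eq_Icc]
  change _ = _ * (fermatQuotient p 3 : ZMod p)
  rw [hq]
  field_simp
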